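/- arXiv:1101.1251 — 3 statements merged into one kernel-verified Lean document; each statement's English description precedes it below -/
import Mathlib

section
/- For an integer ν ≥ 4, the function f_ν(z) = -Σ_{k=1}^∞ 1/(k^ν z + k^{ν-1}) defines an analytic function on the upper half-plane belonging to the Pick class (the series converging locally uniformly on Π). -/
open Complex Filter Finset Metric Set

noncomputable section

/-- The open upper half-plane. -/
def UHP : Set ℂ := {z : ℂ | 0 < z.im}

/-- The Pick class: analytic functions on the upper half-plane with nonnegative
imaginary part there. -/
def IsPick (f : ℂ → ℂ) : Prop :=
  DifferentiableOn ℂ f UHP ∧ ∀ z ∈ UHP, 0 ≤ (f z).im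

/-- A nontangential approach region at `x ∈ ℝ` with aperture `K`. -/
def ntRegion (x K : ℝ) : Set ℂ := {z : ℂ | 0 < z.im ∧ ‖z - x‖ ≤ K * z.im}

/-- `f z → L` as `z → x` nontangentially in the upper half-plane. -/
def NTTendsto (f : ℂ → ℂ) (x : ℝ) (L : ℂ) : Prop :=
  ∀ K > 0, Tendsto f (nhdsWithin (x : ℂ) (ntRegion x K)) (nhds L)

/-- `r z = o((z-x)^n)` as `z → x` nontangentially. -/
def NTLittleO (r : ℂ → ℂ) (x : ℝ) (n : ℕ) : Prop :=
  NTTendsto (fun z => r z / (z - (x : ℂ)) ^ n) x 0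

/-- `f` has the pseudo-Taylor expansion of order `n` about `x` with coefficients `c`. -/
def HasPseudoTaylor (f : ℂ → ℂ) (x : ℝ) (n : ℕ) (c : ℕ → ℂ) : Prop :=
  NTLittleO (fun z => f z - ∑ j ∈ Finset.range (n + 1), c j * (z - (x : ℂ)) ^ j) x n

/-!
Each term `-1 / (a z + b)` with `a > 0` and `b` real maps the upper half-plane into itself,
and on `{ε ≤ Im z}` it is bounded by `1 / (ε a)`. When `∑ 1 / a_k` converges, the
Weierstrass M-test therefore gives locally uniform convergence on the upper half-plane; the
limit is holomorphic and, as a sum of terms with nonnegative imaginary part, lies in the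
Pick class. For `f_ν` take `a_k = k^ν`, `b_k = k^(ν-1)`.
-/

lemma isOpen_UHP : IsOpen UHP := isOpen_lt continuous_const continuous_im

lemma im_one_div_nonpos {w : ℂ} (hw : 0 ≤ w.im) : (1 / w).im ≤ 0 := by
  rw [one_div, inv_im]
  exact div_nonpos_of_nonpos_of_nonneg (neg_nonpos.mpr hw) (normSq_nonneg w)

lemma im_ofReal_mul_add_ofReal (x y : ℝ) (z : ℂ) : ((x : ℂ) * z + y).im = x * z.im := by
  simp

lemma ofReal_mul_add_ofReal_ne_zero {x : ℝ} (hx : 0 < x) (y : ℝ) {z : ℂ} (hz : 0 < z.im) :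
    (x : ℂ) * z + y ≠ 0 := fun h => by
  have := im_ofReal_mul_add_ofReal x y z
  rw [h, zero_im] at this
  exact (mul_pos hx hz).ne this

lemma norm_one_div_ofReal_mul_add_le {x ε : ℝ} (hx : 0 < x) (hε : 0 < ε) (y : ℝ) {z : ℂ}
    (hz : ε ≤ z.im) : ‖1 / ((x : ℂ) * z + y)‖ ≤ ε⁻¹ * x⁻¹ := by
  have hbound : x * ε ≤ ‖(x : ℂ) * z + y‖ :=
    calc x * ε ≤ x * z.im := mul_le_mul_of_nonneg_left hz hx.le
      _ = ((x : ℂ) * z + y).im := (im_ofReal_mul_add_ofReal x y z).symm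
      _ ≤ ‖(x : ℂ) * z + y‖ := im_le_norm _
  rw [norm_div, norm_one, one_div, ← mul_inv, mul_comm ε]
  exact inv_anti₀ (by positivity) hbound

section PickSeries

variable {a : ℕ → ℝ} (b : ℕ → ℝ)

lemma tendstoUniformlyOn_neg_sum_one_div (ha : ∀ k, 0 < a k) (hsum : Summable fun k => (a k)⁻¹)
    {ε : ℝ} (hε : 0 < ε) :
    TendstoUniformlyOn (fun N z => -∑ k ∈ range N, 1 / ((a k : ℂ) * z + b k))
      (fun z => -∑' k, 1 / ((a k : ℂ) * z + b k)) atTop {z | ε ≤ z.im} := by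
  have := tendstoUniformlyOn_tsum_nat (s := {z | ε ≤ z.im})
    (f := fun k z => -(1 / ((a k : ℂ) * z + b k)))
    (hsum.mul_left ε⁻¹) fun k z hz => by
      rw [norm_neg]
      exact norm_one_div_ofReal_mul_add_le (ha k) hε (b k) hz
  simpa only [sum_neg_distrib, tsum_neg] using this

lemma tendstoLocallyUniformlyOn_neg_sum_one_div (ha : ∀ k, 0 < a k)
    (hsum : Summable fun k => (a k)⁻¹) :
    TendstoLocallyUniformlyOn (fun N z => -∑ k ∈ range N, 1 / ((a k : ℂ) * z + b k))
      (fun z => -∑' k, 1 / ((a k : ℂ) * z + b k)) atTop UHP := by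
  intro u hu z hz
  have hnhds : {w : ℂ | z.im / 2 ≤ w.im} ∈ nhdsWithin z UHP :=
    mem_nhdsWithin_of_mem_nhds <|
      continuous_im.continuousAt.eventually (le_mem_nhds (half_lt_self hz))
  exact ⟨_, hnhds, tendstoUniformlyOn_neg_sum_one_div b ha hsum (half_pos hz) u hu⟩

lemma differentiableOn_neg_sum_one_div (ha : ∀ k, 0 < a k) (N : ℕ) :
    DifferentiableOn ℂ (fun z => -∑ k ∈ range N, 1 / ((a k : ℂ) * z + b k)) UHP :=
  (DifferentiableOn.fun_sum fun k _ =>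
    (differentiableOn_const _).div ((differentiableOn_id.const_mul _).add_const _)
      fun _ hz => ofReal_mul_add_ofReal_ne_zero (ha k) (b k) hz).neg

theorem isPick_neg_tsum_one_div (ha : ∀ k, 0 < a k) (hsum : Summable fun k => (a k)⁻¹) :
    IsPick fun z => -∑' k, 1 / ((a k : ℂ) * z + b k) := by
  refine ⟨(tendstoLocallyUniformlyOn_neg_sum_one_div b ha hsum).differentiableOn
    (Eventually.of_forall (differentiableOn_neg_sum_one_div b ha)) isOpen_UHP, fun z hz => ?_⟩
  have hterms : Summable fun k => 1 / ((a k : ℂ) * z + b k) :=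
    .of_norm_bounded (hsum.mul_left (z.im)⁻¹)
      fun k => norm_one_div_ofReal_mul_add_le (ha k) hz (b k) le_rfl
  rw [neg_im, im_tsum hterms, neg_nonneg]
  refine tsum_nonpos fun k => im_one_div_nonpos ?_
  rw [im_ofReal_mul_add_ofReal]
  exact mul_nonneg (ha k).le hz.le

end PickSeries

theorem example_fnu_is_Pick (ν : ℕ) (hν : 4 ≤ ν) :
    IsPick (fun z : ℂ => -∑' k : ℕ, 1 / (((k : ℂ) + 1) ^ ν * z + ((k : ℂ) + 1) ^ (ν - 1))) ∧
    TendstoLocallyUniformlyOn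
      (fun N : ℕ => fun z : ℂ =>
        -∑ k ∈ Finset.range N, 1 / (((k : ℂ) + 1) ^ ν * z + ((k : ℂ) + 1) ^ (ν - 1)))
      (fun z : ℂ => -∑' k : ℕ, 1 / (((k : ℂ) + 1) ^ ν * z + ((k : ℂ) + 1) ^ (ν - 1)))
      atTop UHP := by
  have hpos : ∀ k : ℕ, 0 < ((k : ℝ) + 1) ^ ν := fun k => by positivity
  have hsum : Summable fun k : ℕ => (((k : ℝ) + 1) ^ ν)⁻¹ := by
    simpa using (summable_nat_add_iff 1).mpr
      (Real.summable_nat_pow_inv.mpr (by omega : 1 < ν))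
  exact_mod_cast And.intro
    (isPick_neg_tsum_one_div (fun k => ((k : ℝ) + 1) ^ (ν - 1)) hpos hsum)
    (tendstoLocallyUniformlyOn_neg_sum_one_div (fun k => ((k : ℝ) + 1) ^ (ν - 1)) hpos hsum)
end
end

section
/- The function f(z) = -(1/e) Σ_{k=1}^∞ 1/(k! (z + 1/k)) belongs to the Pick class and has pseudo-Taylor expansions of all orders about 0, yet f does not extend analytically to any neighborhood of 0. -/
/-!
Write `f = -e⁻¹ F` with `F z = ∑ aₖ / (z - pₖ)`, `aₖ = 1/(k+1)! ≥ 0` and real poles `pₖ = -1/(k+1)`.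
Each term of `F` maps the upper half-plane into the lower one, so `f` is a Pick function.
Expanding `1/(z - p)` geometrically, the order-`n` remainder divided by `zⁿ` is
`∑ aₖ pₖ^{-(n+1)} · z/(z - pₖ)`; nontangentially `|z| ≤ K |z - pₖ|`, so the terms are dominated by
`K aₖ/|pₖ|^{n+1} = K (k+1)^{n+1}/(k+1)!`, which is summable, and dominated convergence gives the
pseudo-Taylor expansions of every order. But the poles accumulate at `0`, and `f` blows up along the
vertical line above each of them, so `f` has no continuous extension to any disc about `0`.
-/

open Complex Filter Finset Metric Set

noncomputable section

open scoped Topology Nat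

lemma HasPseudoTaylor.const_mul {f : ℂ → ℂ} {x : ℝ} {n : ℕ} {c : ℕ → ℂ}
    (hf : HasPseudoTaylor f x n c) (b : ℂ) :
    HasPseudoTaylor (fun z => b * f z) x n fun j => b * c j := by
  intro K hK
  have hlim := (hf K hK).const_mul b
  rw [mul_zero] at hlim
  refine hlim.congr fun z => ?_
  simp only [mul_assoc, ← mul_sum, ← mul_sub, mul_div_assoc]

lemma not_exists_continuousOn_ball_eqOn {f : ℂ → ℂ}
    (hf : ∀ r > 0, ∃ x : ℝ, |x| < r ∧ Tendsto (fun t : ℝ => ‖f (x + t * I)‖) (𝓝[>] 0) atTop) :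
    ¬ ∃ (g : ℂ → ℂ) (r : ℝ), 0 < r ∧ ContinuousOn g (ball 0 r) ∧ EqOn f g (UHP ∩ ball 0 r) := by
  rintro ⟨g, r, hr, hg, hfg⟩
  obtain ⟨x, hxr, hx⟩ := hf r hr
  have hxball : (x : ℂ) ∈ ball 0 r := by simpa using hxr
  have hpath : Tendsto (fun t : ℝ => (x : ℂ) + t * I) (𝓝[>] 0) (𝓝 x) :=
    (Continuous.tendsto' (by fun_prop) 0 (x : ℂ) (by simp)).mono_left nhdsWithin_le_nhds
  have hgx : Tendsto (fun t : ℝ => ‖g (x + t * I)‖) (𝓝[>] 0) (𝓝 ‖g x‖) :=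
    ((hg.continuousAt (isOpen_ball.mem_nhds hxball)).tendsto.comp hpath).norm
  have hfg' : (fun t : ℝ => ‖f (x + t * I)‖) =ᶠ[𝓝[>] 0] fun t => ‖g (x + t * I)‖ := by
    filter_upwards [self_mem_nhdsWithin, hpath.eventually (isOpen_ball.mem_nhds hxball)]
      with t ht hball
    rw [hfg ⟨by simpa [UHP] using ht, hball⟩]
  exact not_tendsto_nhds_of_tendsto_atTop (hx.congr' hfg') _ hgx

lemma im_le_norm_sub_ofReal (z : ℂ) (x : ℝ) : z.im ≤ ‖z - x‖ := by
  simpa using (le_abs_self _).trans (abs_im_le_norm (z - x))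

lemma sub_ofReal_ne_zero {z : ℂ} (hz : 0 < z.im) (x : ℝ) : z - x ≠ 0 :=
  norm_pos_iff.mp (hz.trans_le (im_le_norm_sub_ofReal z x))

lemma norm_ofReal_div_le {c δ : ℝ} (hc : 0 ≤ c) (hδ : 0 < δ) {w : ℂ} (hw : δ ≤ ‖w‖) :
    ‖(c : ℂ) / w‖ ≤ c / δ := by
  rw [norm_div, Complex.norm_of_nonneg hc]
  exact div_le_div_of_nonneg_left hc hδ hw

lemma im_ofReal_div_nonpos {c : ℝ} (hc : 0 ≤ c) {w : ℂ} (hw : 0 ≤ w.im) :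
    ((c : ℂ) / w).im ≤ 0 := by
  rw [Complex.div_im]
  simp only [ofReal_im, zero_mul, zero_div, ofReal_re, zero_sub, neg_nonpos]
  exact div_nonneg (mul_nonneg hc hw) (normSq_nonneg w)

lemma norm_div_sub_ofReal_le {K : ℝ} {z : ℂ} (hz : z ∈ ntRegion 0 K) (x : ℝ) :
    ‖z / (z - x)‖ ≤ K := by
  obtain ⟨him, hzK⟩ := hz
  rw [ofReal_zero, sub_zero] at hzK
  have hK : 0 ≤ K := (mul_nonneg_iff_of_pos_right him).mp ((norm_nonneg z).trans hzK)
  rw [norm_div, div_le_iff₀ (norm_pos_iff.mpr (sub_ofReal_ne_zero him x))]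
  exact hzK.trans (mul_le_mul_of_nonneg_left (im_le_norm_sub_ofReal z x) hK)

lemma div_sub_add_sum_div_pow {c z q : ℂ} (hq : q ≠ 0) (hzq : z - q ≠ 0) (n : ℕ) :
    c / (z - q) + ∑ j ∈ range (n + 1), c * z ^ j / q ^ (j + 1) =
      c * (z / q) ^ (n + 1) / (z - q) := by
  have hsum : ∑ j ∈ range (n + 1), c * z ^ j / q ^ (j + 1) =
      c / q * ∑ j ∈ range (n + 1), (z / q) ^ j := by
    rw [mul_sum]
    exact sum_congr rfl fun j _ => by rw [div_pow, pow_succ]; field_simp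
  have hzq' : z - q = q * (z / q - 1) := by field_simp
  have hgeom := geom_sum_mul (z / q) (n + 1)
  rw [hsum, eq_div_iff hzq, add_mul, div_mul_cancel₀ _ hzq, hzq']
  generalize z / q = x at hgeom
  generalize ∑ j ∈ range (n + 1), x ^ j = S at hgeom
  field_simp
  linear_combination c * hgeom

lemma tendsto_tsum_mul_div_sub_ofReal {b : ℕ → ℂ} {p : ℕ → ℝ} (hp : ∀ k, p k ≠ 0)
    (hb : Summable fun k => ‖b k‖) (K : ℝ) :
    Tendsto (fun z => ∑' k, b k * (z / (z - p k))) (𝓝[ntRegion 0 K] 0) (𝓝 0) := by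
  have hlim : ∀ k, Tendsto (fun z : ℂ => b k * (z / (z - p k))) (𝓝[ntRegion 0 K] 0) (𝓝 0) :=
    fun k => by
      have hcont : ContinuousAt (fun z : ℂ => b k * (z / (z - p k))) 0 :=
        continuousAt_const.mul (continuousAt_id.div (continuousAt_id.sub continuousAt_const)
          (by simpa using hp k))
      simpa using hcont.tendsto.mono_left nhdsWithin_le_nhds
  have hbound : ∀ᶠ z in 𝓝[ntRegion 0 K] 0, ∀ k, ‖b k * (z / (z - p k))‖ ≤ ‖b k‖ * K := by
    filter_upwards [self_mem_nhdsWithin] with z hz k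
    rw [norm_mul]
    exact mul_le_mul_of_nonneg_left (norm_div_sub_ofReal_le hz (p k)) (norm_nonneg _)
  simpa using tendsto_tsum_of_dominated_convergence (hb.mul_right K) hlim hbound

def poleSeries (a p : ℕ → ℝ) (z : ℂ) : ℂ := ∑' k, (a k : ℂ) / (z - p k)

section poleSeries

variable {a p : ℕ → ℝ}

lemma summable_poleSeries (ha : ∀ k, 0 ≤ a k) (hs : Summable a) {z : ℂ} (hz : 0 < z.im) :
    Summable fun k => (a k : ℂ) / (z - p k) :=
  .of_norm_bounded (hs.div_const z.im) fun k =>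
    norm_ofReal_div_le (ha k) hz (im_le_norm_sub_ofReal z (p k))

lemma differentiableOn_poleSeries (ha : ∀ k, 0 ≤ a k) (hs : Summable a) :
    DifferentiableOn ℂ (poleSeries a p) UHP := by
  intro z (hz : 0 < z.im)
  set U : Set ℂ := {w | z.im / 2 < w.im}
  have hU : IsOpen U := isOpen_lt continuous_const continuous_im
  have hzU : z ∈ U := half_lt_self hz
  have hdiff : DifferentiableOn ℂ (poleSeries a p) U := by
    refine differentiableOn_tsum_of_summable_norm (hs.div_const (z.im / 2)) (fun k => ?_) hU
      fun k w hw => norm_ofReal_div_le (ha k) (half_pos hz)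
        (hw.le.trans (im_le_norm_sub_ofReal w (p k)))
    exact (differentiableOn_const _).div (differentiableOn_id.sub_const _) fun w hw =>
      sub_ofReal_ne_zero ((half_pos hz).trans hw) (p k)
  exact (hdiff.differentiableAt (hU.mem_nhds hzU)).differentiableWithinAt

lemma poleSeries_im_nonpos (ha : ∀ k, 0 ≤ a k) (hs : Summable a) {z : ℂ} (hz : z ∈ UHP) :
    (poleSeries a p z).im ≤ 0 := by
  rw [poleSeries, im_tsum (summable_poleSeries ha hs hz)]
  exact tsum_nonpos fun k => im_ofReal_div_nonpos (ha k) (by simpa using hz.le)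

lemma summable_ofReal_div_pow (ha : ∀ k, 0 ≤ a k) {m : ℕ}
    (hm : Summable fun k => a k / |p k| ^ m) :
    Summable fun k => (a k : ℂ) / (p k : ℂ) ^ m :=
  .of_norm_bounded hm fun k => by simp [abs_of_nonneg (ha k)]

lemma poleSeries_sub_sum (ha : ∀ k, 0 ≤ a k) (hp : ∀ k, p k ≠ 0)
    (hm : ∀ m, Summable fun k => a k / |p k| ^ m) {z : ℂ} (hz : 0 < z.im) (n : ℕ) :
    poleSeries a p z - ∑ j ∈ range (n + 1), (-∑' k, (a k : ℂ) / (p k : ℂ) ^ (j + 1)) * z ^ j =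
      ∑' k, (a k : ℂ) * (z / p k) ^ (n + 1) / (z - p k) := by
  have hterm (j : ℕ) : Summable fun k => (a k : ℂ) * z ^ j / (p k : ℂ) ^ (j + 1) := by
    simpa only [mul_div_right_comm] using
      (summable_ofReal_div_pow ha (hm (j + 1))).mul_right (z ^ j)
  have hswap : ∑ j ∈ range (n + 1), (-∑' k, (a k : ℂ) / (p k : ℂ) ^ (j + 1)) * z ^ j =
      -∑' k, ∑ j ∈ range (n + 1), (a k : ℂ) * z ^ j / (p k : ℂ) ^ (j + 1) := by
    rw [Summable.tsum_finsetSum fun j _ => hterm j, ← sum_neg_distrib]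
    refine sum_congr rfl fun j _ => ?_
    rw [neg_mul, ← tsum_mul_right]
    simp only [mul_div_right_comm]
  have hs : Summable a := by simpa using hm 0
  rw [hswap, sub_neg_eq_add, poleSeries,
    ← (summable_poleSeries ha hs hz).tsum_add (summable_sum fun j _ => hterm j)]
  exact tsum_congr fun k =>
    div_sub_add_sum_div_pow (ofReal_ne_zero.mpr (hp k)) (sub_ofReal_ne_zero hz _) n

lemma hasPseudoTaylor_poleSeries (ha : ∀ k, 0 ≤ a k) (hp : ∀ k, p k ≠ 0)
    (hm : ∀ m, Summable fun k => a k / |p k| ^ m) (n : ℕ) :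
    HasPseudoTaylor (poleSeries a p) 0 n fun j => -∑' k, (a k : ℂ) / (p k : ℂ) ^ (j + 1) := by
  intro K _
  have hb : Summable fun k => ‖(a k : ℂ) / (p k : ℂ) ^ (n + 1)‖ := by
    refine (hm (n + 1)).congr fun k => ?_
    simp [abs_of_nonneg (ha k)]
  refine (tendsto_tsum_mul_div_sub_ofReal hp hb K).congr' ?_
  filter_upwards [self_mem_nhdsWithin] with z hz
  have hz0 : z ≠ 0 := fun h => by simpa [h] using hz.1
  rw [ofReal_zero, sub_zero, poleSeries_sub_sum ha hp hm hz.1, ← tsum_div_const]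
  refine tsum_congr fun k => ?_
  have hpk : (p k : ℂ) ≠ 0 := ofReal_ne_zero.mpr (hp k)
  have hzp := sub_ofReal_ne_zero hz.1 (p k)
  rw [div_pow]
  field_simp
  ring

lemma tendsto_norm_poleSeries_atTop (ha : ∀ k, 0 ≤ a k) (hs : Summable a) {k₀ : ℕ}
    (hk₀ : 0 < a k₀) {δ : ℝ} (hδ : 0 < δ) (hsep : ∀ k ≠ k₀, δ ≤ |p k - p k₀|) :
    Tendsto (fun t : ℝ => ‖poleSeries a p (p k₀ + t * I)‖) (𝓝[>] 0) atTop := by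
  have hrest (t : ℝ) :
      ‖∑' k, if k = k₀ then 0 else (a k : ℂ) / (p k₀ + t * I - p k)‖ ≤ (∑' k, a k) / δ := by
    refine tsum_of_norm_bounded (hs.hasSum.div_const δ) fun k => ?_
    split_ifs with hk
    · simpa using div_nonneg (ha k) hδ.le
    refine norm_ofReal_div_le (ha k) hδ ((hsep k hk).trans ?_)
    simpa [abs_sub_comm] using abs_re_le_norm (p k₀ + t * I - p k)
  have hpole : ∀ t > (0 : ℝ), a k₀ / t - (∑' k, a k) / δ ≤ ‖poleSeries a p (p k₀ + t * I)‖ := by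
    intro t ht
    have hsplit := (summable_poleSeries (p := p) ha hs (z := p k₀ + t * I)
      (by simpa using ht)).tsum_eq_add_tsum_ite k₀
    have hmain : ‖(a k₀ : ℂ) / (p k₀ + t * I - p k₀)‖ = a k₀ / t := by
      simp [abs_of_nonneg (ha k₀), abs_of_pos ht]
    rw [poleSeries, hsplit]
    refine le_trans ?_ (norm_sub_le_norm_add _ _)
    linarith [hrest t]
  have hblow : Tendsto (fun t : ℝ => a k₀ / t - (∑' k, a k) / δ) (𝓝[>] 0) atTop :=
    tendsto_atTop_add_const_right _ _ <|
      (tendsto_inv_nhdsGT_zero.const_mul_atTop hk₀).congr fun t => (div_eq_mul_inv _ _).symm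
  exact tendsto_atTop_mono' _ (eventually_nhdsWithin_of_forall hpole) hblow

end poleSeries

lemma summable_pow_div_factorial_succ (m : ℕ) :
    Summable fun k : ℕ => ((k : ℝ) + 1) ^ m / (k + 1)! := by
  have hexp : Summable fun k : ℕ => m ! * (Real.exp 1 ^ (k + 1) / (k + 1)!) :=
    ((summable_nat_add_iff 1).mpr (Real.summable_pow_div_factorial _)).mul_left _
  refine hexp.of_nonneg_of_le (fun k => by positivity) fun k => ?_
  have hpow : ((k : ℝ) + 1) ^ m ≤ m ! * Real.exp 1 ^ (k + 1) := by
    have := Real.pow_div_factorial_le_exp (x := (k : ℝ) + 1) (by positivity) m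
    rw [div_le_iff₀ (by positivity)] at this
    rw [Real.exp_one_pow]
    push_cast
    linarith
  rw [mul_div_assoc']
  gcongr

def invFactorialSucc (k : ℕ) : ℝ := 1 / (k + 1)!

def negInvSucc (k : ℕ) : ℝ := -1 / ((k : ℝ) + 1)

lemma abs_negInvSucc (k : ℕ) : |negInvSucc k| = 1 / ((k : ℝ) + 1) := by
  rw [negInvSucc, abs_div, abs_neg, abs_one, abs_of_pos (by positivity)]

lemma summable_invFactorialSucc_div_abs_pow (m : ℕ) :
    Summable fun k => invFactorialSucc k / |negInvSucc k| ^ m := by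
  refine (summable_pow_div_factorial_succ m).congr fun k => ?_
  rw [abs_negInvSucc, invFactorialSucc, div_pow, one_pow, div_div_eq_mul_div, one_div_mul_eq_div,
    div_one]

lemma le_abs_negInvSucc_sub {k k₀ : ℕ} (h : k ≠ k₀) :
    1 / (((k₀ : ℝ) + 1) * ((k₀ : ℝ) + 2)) ≤ |negInvSucc k - negInvSucc k₀| := by
  unfold negInvSucc
  rcases Nat.lt_or_gt_of_ne h with hk | hk
  · have hk' : (k : ℝ) + 1 ≤ k₀ := by exact_mod_cast hk
    refine le_abs.mpr (Or.inr ?_)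
    rw [div_le_iff₀ (by positivity)]
    field_simp
    nlinarith
  · have hk' : (k₀ : ℝ) + 1 ≤ k := by exact_mod_cast hk
    refine le_abs.mpr (Or.inl ?_)
    rw [div_le_iff₀ (by positivity)]
    field_simp
    nlinarith

lemma tendsto_norm_poleSeries_negInvSucc (k₀ : ℕ) :
    Tendsto (fun t : ℝ => ‖poleSeries invFactorialSucc negInvSucc (negInvSucc k₀ + t * I)‖)
      (𝓝[>] 0) atTop :=
  tendsto_norm_poleSeries_atTop (fun k => by unfold invFactorialSucc; positivity)
    (by simpa using summable_invFactorialSucc_div_abs_pow 0)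
    (by unfold invFactorialSucc; positivity) (by positivity) fun k hk => le_abs_negInvSucc_sub hk

lemma tsum_one_div_factorial_mul_eq_poleSeries (z : ℂ) :
    ∑' k : ℕ, 1 / ((k + 1)! * (z + 1 / ((k : ℂ) + 1))) =
      poleSeries invFactorialSucc negInvSucc z := by
  refine tsum_congr fun k => ?_
  simp only [invFactorialSucc, negInvSucc, ofReal_div, ofReal_one, ofReal_neg, ofReal_add,
    ofReal_natCast, div_div]
  ring

theorem example_infinite_order_not_analytic :
    IsPick (fun z : ℂ =>
      -(Real.exp 1 : ℂ)⁻¹ * ∑' k : ℕ, 1 / ((Nat.factorial (k + 1) : ℂ) * (z + 1 / ((k : ℂ) + 1)))) ∧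
    (∀ n : ℕ, ∃ c : ℕ → ℂ, HasPseudoTaylor
      (fun z : ℂ =>
        -(Real.exp 1 : ℂ)⁻¹ * ∑' k : ℕ, 1 / ((Nat.factorial (k + 1) : ℂ) * (z + 1 / ((k : ℂ) + 1))))
      0 n c) ∧
    ¬ ∃ (g : ℂ → ℂ) (r : ℝ), 0 < r ∧ DifferentiableOn ℂ g (Metric.ball 0 r) ∧
        Set.EqOn
          (fun z : ℂ =>
            -(Real.exp 1 : ℂ)⁻¹ *
              ∑' k : ℕ, 1 / ((Nat.factorial (k + 1) : ℂ) * (z + 1 / ((k : ℂ) + 1))))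
          g (UHP ∩ Metric.ball 0 r) := by
  have ha (k : ℕ) : 0 ≤ invFactorialSucc k := by unfold invFactorialSucc; positivity
  have hm := summable_invFactorialSucc_div_abs_pow
  have hs : Summable invFactorialSucc := by simpa using hm 0
  have hp (k : ℕ) : negInvSucc k ≠ 0 := by unfold negInvSucc; positivity
  simp only [tsum_one_div_factorial_mul_eq_poleSeries]
  rw [show -(Real.exp 1 : ℂ)⁻¹ = ((-(Real.exp 1)⁻¹ : ℝ) : ℂ) by push_cast; rfl]
  refine ⟨⟨(differentiableOn_poleSeries ha hs).const_mul _, fun z hz => ?_⟩,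
    fun n => ⟨_, (hasPseudoTaylor_poleSeries ha hp hm n).const_mul _⟩,
    fun ⟨g, r, hr, hg, hfg⟩ => not_exists_continuousOn_ball_eqOn ?_
      ⟨g, r, hr, hg.continuousOn, hfg⟩⟩
  · rw [im_ofReal_mul]
    exact mul_nonneg_of_nonpos_of_nonpos (by simp; positivity) (poleSeries_im_nonpos ha hs hz)
  · intro r hr
    obtain ⟨k₀, hk₀⟩ := exists_nat_one_div_lt hr
    refine ⟨negInvSucc k₀, (abs_negInvSucc k₀).trans_lt hk₀, ?_⟩
    refine ((tendsto_norm_poleSeries_negInvSucc k₀).const_mul_atTop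
      (inv_pos.mpr (Real.exp_pos 1))).congr fun t => ?_
    rw [norm_mul, norm_real, norm_neg, norm_inv, Real.norm_of_nonneg (Real.exp_pos 1).le]
end
end

section
/- Let g, G be in the Pick class and x ∈ ℝ, with G analytic at x, and suppose g(z) - G(z) = o((z-x)^N) nontangentially for some N ≥ 0. If f, F are the augmentations of g, G respectively at x by a^0 ∈ ℝ, a^1 > 0, then f(z) - F(z) = (g(z) - G(z))(F(z) - a^0)(f(z) - a^0) for all z in Π, and consequently f(z) - F(z) = o((z-x)^{N+2}) nontangentially. -/
open Complex Filter Finset Metric Set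

noncomputable section

/-!
With `w = 1 / (a₁ (z - x))` we have `f - a₀ = 1 / (w - g)`, and `Im w < 0 ≤ Im g` on the upper
half-plane, so the identity is just `1/A - 1/B = (B - A) / (A B)`. Since `G` is continuous at `x`
and `g - G = o(1)`, `(z - x) g(z) → 0`, hence `f - a₀ = (z - x) / (1/a₁ - (z - x) g) = O(z - x)`,
and likewise `F - a₀ = O(z - x)`. The identity multiplies `o((z - x)^N)` by these two factors.
-/

open Topology Asymptotics

def augmentation (h : ℂ → ℂ) (x a₀ a₁ : ℝ) (z : ℂ) : ℂ :=
  a₀ + 1 / (1 / (a₁ * (z - x)) - h z)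

lemma sub_ofReal_ne_zero_of_mem_UHP {z : ℂ} (hz : z ∈ UHP) (x : ℝ) : z - x ≠ 0 := by
  intro h
  have : z.im = 0 := by simpa using congrArg Complex.im h
  exact hz.ne' this

lemma one_div_mul_sub_sub_ne_zero {a₁ : ℝ} (ha₁ : 0 < a₁) (x : ℝ) {z w : ℂ} (hz : z ∈ UHP)
    (hw : 0 ≤ w.im) : 1 / (a₁ * (z - x)) - w ≠ 0 := by
  have hne : (a₁ : ℂ) * (z - x) ≠ 0 :=
    mul_ne_zero (ofReal_ne_zero.mpr ha₁.ne') (sub_ofReal_ne_zero_of_mem_UHP hz x)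
  have him : (1 / ((a₁ : ℂ) * (z - x))).im < 0 := by
    rw [one_div, inv_im, neg_div]
    refine neg_neg_of_pos (div_pos ?_ (normSq_pos.mpr hne))
    simpa using mul_pos ha₁ hz
  intro h
  have := congrArg Complex.im h
  rw [sub_im, zero_im] at this
  linarith

lemma augmentation_sub_augmentation {g G : ℂ → ℂ} {x a₀ a₁ : ℝ} (ha₁ : 0 < a₁) {z : ℂ}
    (hz : z ∈ UHP) (hg : 0 ≤ (g z).im) (hG : 0 ≤ (G z).im) :
    augmentation g x a₀ a₁ z - augmentation G x a₀ a₁ z =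
      (g z - G z) * (augmentation G x a₀ a₁ z - a₀) * (augmentation g x a₀ a₁ z - a₀) := by
  have hA := one_div_mul_sub_sub_ne_zero ha₁ x hz hg
  have hB := one_div_mul_sub_sub_ne_zero ha₁ x hz hG
  simp only [augmentation, add_sub_add_left_eq_sub, add_sub_cancel_left]
  rw [← sub_sub_sub_cancel_left (G z) (g z) (1 / (a₁ * (z - x)))]
  field_simp

lemma augmentation_sub_isBigO {h : ℂ → ℂ} {x a₀ a₁ : ℝ} (ha₁ : a₁ ≠ 0) {l : Filter ℂ}
    (hl : l ≤ 𝓝[≠] (x : ℂ)) (hh : h =O[l] fun _ => (1 : ℂ)) :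
    (fun z => augmentation h x a₀ a₁ z - a₀) =O[l] fun z => z - x := by
  have hsub : Tendsto (fun z : ℂ => z - x) l (𝓝 0) :=
    tendsto_sub_nhds_zero_iff.mpr (tendsto_id.mono_left (hl.trans nhdsWithin_le_nhds))
  have hmul : Tendsto (fun z => (z - x) * h z) l (𝓝 0) := by
    simpa using ((isBigO_refl (fun z : ℂ => z - x) l).mul hh).trans_tendsto (by simpa using hsub)
  have hinv : Tendsto (fun z => (1 / (a₁ : ℂ) - (z - x) * h z)⁻¹) l (𝓝 a₁) := by
    simpa using (tendsto_const_nhds (x := 1 / (a₁ : ℂ))).sub hmul |>.inv₀ (by simpa using ha₁)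
  have heq : (fun z => (z - x) * (1 / (a₁ : ℂ) - (z - x) * h z)⁻¹) =ᶠ[l]
      fun z => augmentation h x a₀ a₁ z - a₀ := by
    filter_upwards [hl eventually_mem_nhdsWithin] with z hz
    have hz' : z - x ≠ 0 := sub_ne_zero.mpr hz
    simp only [augmentation, add_sub_cancel_left]
    field_simp
  simpa using ((isBigO_refl (fun z : ℂ => z - x) l).mul (hinv.isBigO_one ℂ)).congr' heq (by simp)

lemma eventually_mem_UHP_nhdsWithin_ntRegion (x K : ℝ) :
    ∀ᶠ z in 𝓝[ntRegion x K] (x : ℂ), z ∈ UHP :=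
  eventually_mem_nhdsWithin.mono fun _ hz => hz.1

lemma ntLittleO_iff_isLittleO {r : ℂ → ℂ} {x : ℝ} {n : ℕ} :
    NTLittleO r x n ↔ ∀ K > 0, r =o[𝓝[ntRegion x K] (x : ℂ)] fun z => (z - x) ^ n := by
  refine forall₂_congr fun K _ => (isLittleO_iff_tendsto' ?_).symm
  filter_upwards [eventually_mem_UHP_nhdsWithin_ntRegion x K] with z hz h
  exact absurd h (pow_ne_zero n (sub_ofReal_ne_zero_of_mem_UHP hz x))

theorem augmentation_identity_and_littleO (g G f F : ℂ → ℂ) (x a₀ a₁ : ℝ) (N : ℕ)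
    (hg : IsPick g) (hG : IsPick G) (hGan : AnalyticAt ℂ G (x : ℂ)) (ha₁ : 0 < a₁)
    (hlo : NTLittleO (fun z => g z - G z) x N)
    (hfdef : ∀ z ∈ UHP, f z = (a₀ : ℂ) + 1 / (1 / ((a₁ : ℂ) * (z - (x : ℂ))) - g z))
    (hFdef : ∀ z ∈ UHP, F z = (a₀ : ℂ) + 1 / (1 / ((a₁ : ℂ) * (z - (x : ℂ))) - G z)) :
    (∀ z ∈ UHP, f z - F z = (g z - G z) * (F z - (a₀ : ℂ)) * (f z - (a₀ : ℂ))) ∧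
    NTLittleO (fun z => f z - F z) x (N + 2) := by
  have hf : ∀ z ∈ UHP, f z = augmentation g x a₀ a₁ z := hfdef
  have hF : ∀ z ∈ UHP, F z = augmentation G x a₀ a₁ z := hFdef
  have hid : ∀ z ∈ UHP, f z - F z = (g z - G z) * (F z - a₀) * (f z - a₀) := fun z hz => by
    rw [hf z hz, hF z hz]
    exact augmentation_sub_augmentation ha₁ hz (hg.2 z hz) (hG.2 z hz)
  refine ⟨hid, ntLittleO_iff_isLittleO.mpr fun K hK => ?_⟩
  set l := 𝓝[ntRegion x K] (x : ℂ)
  have hUHP : ∀ᶠ z in l, z ∈ UHP := eventually_mem_UHP_nhdsWithin_ntRegion x K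
  have hl : l ≤ 𝓝[≠] (x : ℂ) :=
    nhdsWithin_mono _ fun z hz => sub_ne_zero.mp (sub_ofReal_ne_zero_of_mem_UHP hz.1 x)
  have hl' : l ≤ 𝓝 (x : ℂ) := hl.trans nhdsWithin_le_nhds
  have hgG := ntLittleO_iff_isLittleO.mp hlo K hK
  have hG1 := (hGan.continuousAt.tendsto.mono_left hl').isBigO_one ℂ
  have hpow := (((continuous_sub_right (x : ℂ)).pow N).tendsto x).mono_left hl'
  have hg1 : g =O[l] fun _ => (1 : ℂ) := by
    simpa using hG1.add (hgG.isBigO.trans (hpow.isBigO_one ℂ))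
  have hFO : (fun z => F z - a₀) =O[l] fun z => z - x :=
    (augmentation_sub_isBigO (a₀ := a₀) ha₁.ne' hl hG1).congr'
      (hUHP.mono fun z hz => congrArg (· - _) (hF z hz).symm) .rfl
  have hfO : (fun z => f z - a₀) =O[l] fun z => z - x :=
    (augmentation_sub_isBigO (a₀ := a₀) ha₁.ne' hl hg1).congr'
      (hUHP.mono fun z hz => congrArg (· - _) (hf z hz).symm) .rfl
  exact ((hgG.mul_isBigO hFO).mul_isBigO hfO).congr' (hUHP.mono fun z hz => (hid z hz).symm)
    (.of_forall fun z => by ring)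
end
end
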